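/- arXiv:2211.07972 — 2 statements merged into one kernel-verified Lean document; each statement's English description precedes it below -/
import Mathlib

section
/- The Johnstone dcpo J = ℕ × (ℕ ∪ {ω}) with order (j,k) ≤ (m,n) iff (j = m and k ≤ n) or (n = ω and k ≤ n), equipped with the Scott topology, is a c-well-filtered space. -/
universe u

/-- A set is saturated if it equals the intersection of its open neighbourhoods. -/
def IsSaturatedSet {X : Type u} [TopologicalSpace X] (A : Set X) : Prop :=
  A = ⋂₀ {U : Set X | IsOpen U ∧ A ⊆ U}

/-- A family of sets is countably filtered (under `⊆`) if every countable subfamily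
has a lower bound in the family. -/
def CntFilteredFam {X : Type u} (S : Set (Set X)) : Prop :=
  ∀ T ⊆ S, T.Countable → ∃ L ∈ S, ∀ t ∈ T, L ⊆ t

/-- A family of sets is countably directed (under `⊆`) if every countable subfamily
has an upper bound in the family. -/
def CntDirectedFam {X : Type u} (S : Set (Set X)) : Prop :=
  ∀ T ⊆ S, T.Countable → ∃ U ∈ S, ∀ t ∈ T, t ⊆ U

/-- A space is c-well-filtered if for every countably filtered family of saturated
Lindelöf subsets whose intersection is contained in an open `U`, some member is contained in `U`. -/
def CWellFiltered (X : Type u) [TopologicalSpace X] : Prop :=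
  ∀ S : Set (Set X), (∀ K ∈ S, IsSaturatedSet K ∧ IsLindelof K) →
    CntFilteredFam S → ∀ U : Set X, IsOpen U → ⋂₀ S ⊆ U → ∃ K ∈ S, K ⊆ U

/-- A subset `D` is countably directed w.r.t. `le` if every countable subset of `D`
has an upper bound in `D`. -/
def CntDirected {α : Type u} (le : α → α → Prop) (D : Set α) : Prop :=
  ∀ E ⊆ D, E.Countable → ∃ d ∈ D, ∀ e ∈ E, le e d

/-- `a` is a least upper bound of `D` w.r.t. `le`. -/
def RIsLUB {α : Type u} (le : α → α → Prop) (D : Set α) (a : α) : Prop :=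
  (∀ d ∈ D, le d a) ∧ ∀ b, (∀ d ∈ D, le d b) → le a b

/-- Countably directed complete: every countably directed subset has a least upper bound. -/
def CDComplete {α : Type u} (le : α → α → Prop) : Prop :=
  ∀ D : Set α, CntDirected le D → ∃ a, RIsLUB le D a

/-- `x` is countably way-below `y`. -/
def CWayBelow {α : Type u} (le : α → α → Prop) (x y : α) : Prop :=
  ∀ D : Set α, CntDirected le D → ∀ a, RIsLUB le D a → le y a → ∃ d ∈ D, le x d

/-- `U` is σ-Scott open: an upper set meeting every countably directed set whose sup lies in `U`. -/
def SigmaScottOpenRel {α : Type u} (le : α → α → Prop) (U : Set α) : Prop :=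
  (∀ x ∈ U, ∀ y, le x y → y ∈ U) ∧
  ∀ D : Set α, CntDirected le D → ∀ a, RIsLUB le D a → a ∈ U → ∃ d ∈ D, d ∈ U

/-- `F` is countably filtered w.r.t. `le`: every countable subset has a lower bound in `F`. -/
def CntFilteredRel {α : Type u} (le : α → α → Prop) (F : Set α) : Prop :=
  ∀ E ⊆ F, E.Countable → ∃ l ∈ F, ∀ e ∈ E, le l e

/-- Countably approximating: countably directed complete and each `x` is the sup of
the countably directed set of elements countably way-below `x`. -/
def CntApprox {α : Type u} (le : α → α → Prop) : Prop :=
  CDComplete le ∧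
    ∀ x, CntDirected le {y | CWayBelow le y x} ∧ RIsLUB le {y | CWayBelow le y x} x

/-- `B` is a σ-basis: for each `x`, `B ∩ ⇓꜀x` is countably directed with sup `x`. -/
def IsSigmaBasis {α : Type u} (le : α → α → Prop) (B : Set α) : Prop :=
  ∀ x, CntDirected le (B ∩ {y | CWayBelow le y x}) ∧
    RIsLUB le (B ∩ {y | CWayBelow le y x}) x

/-- The Scott topology on a preorder. -/
def scottTopology (L : Type u) [Preorder L] : TopologicalSpace L where
  IsOpen U := (∀ x ∈ U, ∀ y, x ≤ y → y ∈ U) ∧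
    ∀ D : Set L, D.Nonempty → DirectedOn (· ≤ ·) D → ∀ a, IsLUB D a → a ∈ U → ∃ d ∈ D, d ∈ U
  isOpen_univ := by
    refine ⟨fun _ _ _ _ => trivial, ?_⟩
    intro D hne _ a _ _
    obtain ⟨d, hd⟩ := hne
    exact ⟨d, hd, trivial⟩
  isOpen_inter := by
    rintro s t ⟨hsu, hs⟩ ⟨htu, ht⟩
    refine ⟨fun x hx y hxy => ⟨hsu x hx.1 y hxy, htu x hx.2 y hxy⟩, ?_⟩
    intro D hne hdir a ha haU
    obtain ⟨d1, hd1, hd1s⟩ := hs D hne hdir a ha haU.1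
    obtain ⟨d2, hd2, hd2t⟩ := ht D hne hdir a ha haU.2
    obtain ⟨d3, hd3, h13, h23⟩ := hdir d1 hd1 d2 hd2
    exact ⟨d3, hd3, hsu d1 hd1s d3 h13, htu d2 hd2t d3 h23⟩
  isOpen_sUnion := by
    intro S hS
    refine ⟨?_, ?_⟩
    · intro x hx y hxy
      obtain ⟨s, hsS, hxs⟩ := hx
      exact ⟨s, hsS, (hS s hsS).1 x hxs y hxy⟩
    · intro D hne hdir a ha haU
      obtain ⟨s, hsS, has⟩ := haU
      obtain ⟨d, hd, hds⟩ := (hS s hsS).2 D hne hdir a ha has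
      exact ⟨d, hd, s, hsS, hds⟩

/-- Johnstone's dcpo `J = ℕ × (ℕ ∪ {ω})`. -/
def JSpace : Type := ℕ × WithTop ℕ

/-- The Johnstone order: `(j,k) ≤ (m,n)` iff (`j = m` and `k ≤ n`) or (`n = ω` and `k ≤ n`). -/
instance : Preorder JSpace where
  le a b := (a.1 = b.1 ∧ a.2 ≤ b.2) ∨ (b.2 = (⊤ : WithTop ℕ) ∧ a.2 ≤ b.2)
  le_refl a := Or.inl ⟨rfl, le_refl _⟩
  le_trans a b c hab hbc := by
    rcases hbc with ⟨h1, h2⟩ | ⟨h1, h2⟩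
    · rcases hab with ⟨g1, g2⟩ | ⟨g1, g2⟩
      · exact Or.inl ⟨g1.trans h1, g2.trans h2⟩
      · refine Or.inr ⟨?_, ?_⟩
        · exact top_le_iff.mp (g1 ▸ h2)
        · exact le_top.trans (top_le_iff.mp (g1 ▸ h2)).ge
    · exact Or.inr ⟨h1, h1 ▸ le_top⟩

instance : Countable JSpace := inferInstanceAs (Countable (ℕ × WithTop ℕ))

/-- Each point outside `U` is avoided by some member of `S`; a lower bound in `S` of these
countably many members avoids all of them. -/
theorem CntFilteredFam.exists_subset_of_sInter_subset {X : Type u} {S : Set (Set X)}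
    (hS : CntFilteredFam S) {U : Set X} (hU : Uᶜ.Countable) (hsub : ⋂₀ S ⊆ U) :
    ∃ K ∈ S, K ⊆ U := by
  have avoid : ∀ x ∈ Uᶜ, ∃ K ∈ S, x ∉ K := fun x hx => by
    simpa only [Set.mem_sInter, not_forall, exists_prop] using mt (@hsub x) hx
  choose! f hfS hfx using avoid
  obtain ⟨L, hLS, hL⟩ := hS (f '' Uᶜ) (Set.image_subset_iff.2 hfS) (hU.image f)
  refine ⟨L, hLS, fun y hy => by_contra fun hyU => hfx y hyU ?_⟩
  exact hL _ (Set.mem_image_of_mem f hyU) hy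

theorem cWellFiltered_of_countable (X : Type u) [TopologicalSpace X] [Countable X] :
    CWellFiltered X :=
  fun _ _ hS _ _ hsub => hS.exists_subset_of_sInter_subset (Set.to_countable _) hsub

/-- Johnstone's dcpo with the Scott topology is c-well-filtered. -/
theorem stmt5 : @CWellFiltered JSpace (scottTopology JSpace) :=
  @cWellFiltered_of_countable JSpace (scottTopology JSpace) _
end

section
/- Let X be a c-well-filtered P-space and K₁, K₂ saturated Lindelöf subsets. If there exists an open U with K₂ ⊆ U ⊆ K₁ (i.e., K₂ ⊆ int(K₁)), then K₁ ≪_c K₂ in the poset (LQ(X), ⊇). -/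
/-! In a c-well-filtered space the intersection of a countably directed family `D` in
`(LQ(X), ⊇)` is again saturated and Lindelöf, so it is an upper bound of `D` and lies inside
the supremum, hence inside `K₂ ⊆ U`. Applying c-well-filteredness once more to the open `U`
puts some member of `D` inside `U ⊆ K₁`. -/

universe u

/-- A P-space: every countable intersection of open sets is open. -/
def PSpace (X : Type u) [TopologicalSpace X] : Prop :=
  ∀ 𝒰 : Set (Set X), 𝒰.Countable → (∀ U ∈ 𝒰, IsOpen U) → IsOpen (⋂₀ 𝒰)

/-- Locally Lindelöf: every open neighbourhood contains a saturated Lindelöf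
neighbourhood. -/
def LocallyLindelofSp (X : Type u) [TopologicalSpace X] : Prop :=
  ∀ U : Set X, IsOpen U → ∀ x ∈ U, ∃ K : Set X,
    IsSaturatedSet K ∧ IsLindelof K ∧ x ∈ interior K ∧ K ⊆ U

/-- The saturated Lindelöf subsets of `X`. -/
def LQ (X : Type u) [TopologicalSpace X] : Type u :=
  {K : Set X // IsSaturatedSet K ∧ IsLindelof K}

/-- The order of `(LQ(X), ⊇)`: reverse inclusion. -/
def lqLe {X : Type u} [TopologicalSpace X] (A B : LQ X) : Prop := B.1 ⊆ A.1

theorem IsSaturatedSet.sInter {X : Type u} [TopologicalSpace X] {S : Set (Set X)}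
    (hS : ∀ K ∈ S, IsSaturatedSet K) : IsSaturatedSet (⋂₀ S) := by
  refine Set.Subset.antisymm (fun x hx => Set.mem_sInter.2 fun V hV => hV.2 hx) ?_
  intro x hx
  refine Set.mem_sInter.2 fun K hK => ?_
  rw [hS K hK]
  exact Set.mem_sInter.2 fun V hV =>
    Set.mem_sInter.1 hx V ⟨hV.1, (Set.sInter_subset_of_mem hK).trans hV.2⟩

/-- In a c-well-filtered space any open cover of `⋂₀ S` already covers a member of `S`,
and that member has a countable subcover. -/
theorem CWellFiltered.isLindelof_sInter {X : Type u} [TopologicalSpace X]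
    (hW : CWellFiltered X) {S : Set (Set X)} (hS : ∀ K ∈ S, IsSaturatedSet K ∧ IsLindelof K)
    (hSf : CntFilteredFam S) : IsLindelof (⋂₀ S) := by
  rw [isLindelof_iff_countable_subcover]
  intro ι V hVo hSV
  obtain ⟨K, hKS, hKV⟩ := hW S hS hSf (⋃ i, V i) (isOpen_iUnion hVo) hSV
  obtain ⟨r, hrc, hrV⟩ := (hS K hKS).2.elim_countable_subcover V hVo hKV
  exact ⟨r, hrc, (Set.sInter_subset_of_mem hKS).trans hrV⟩

theorem LQ.forall_mem_image_val {X : Type u} [TopologicalSpace X] (D : Set (LQ X)) :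
    ∀ K ∈ Subtype.val '' D, IsSaturatedSet K ∧ IsLindelof K := by
  rintro _ ⟨d, -, rfl⟩
  exact d.2

theorem cntFilteredFam_image_val {X : Type u} [TopologicalSpace X] {D : Set (LQ X)}
    (hD : CntDirected lqLe D) : CntFilteredFam (Subtype.val '' D) := by
  intro T hTD hTc
  have hE : (Subtype.val ⁻¹' T ∩ D).Countable :=
    (hTc.preimage Subtype.val_injective).mono Set.inter_subset_left
  obtain ⟨d, hdD, hd⟩ := hD _ Set.inter_subset_right hE
  refine ⟨d.1, Set.mem_image_of_mem _ hdD, ?_⟩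
  rintro t htT
  obtain ⟨e, heD, rfl⟩ := hTD htT
  exact hd e ⟨htT, heD⟩

def LQ.sInter {X : Type u} [TopologicalSpace X] (hW : CWellFiltered X) (D : Set (LQ X))
    (hD : CntDirected lqLe D) : LQ X :=
  ⟨⋂₀ (Subtype.val '' D),
    IsSaturatedSet.sInter fun K hK => (LQ.forall_mem_image_val D K hK).1,
    hW.isLindelof_sInter (LQ.forall_mem_image_val D) (cntFilteredFam_image_val hD)⟩

theorem LQ.lqLe_sInter {X : Type u} [TopologicalSpace X] (hW : CWellFiltered X)
    {D : Set (LQ X)} (hD : CntDirected lqLe D) {d : LQ X} (hd : d ∈ D) :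
    lqLe d (LQ.sInter hW D hD) :=
  Set.sInter_subset_of_mem (Set.mem_image_of_mem _ hd)

theorem stmt16_general {X : Type u} [TopologicalSpace X] (hW : CWellFiltered X)
    (K₁ K₂ : LQ X) (h : ∃ U : Set X, IsOpen U ∧ K₂.1 ⊆ U ∧ U ⊆ K₁.1) :
    CWayBelow (lqLe (X := X)) K₁ K₂ := by
  obtain ⟨U, hUo, hK₂U, hUK₁⟩ := h
  intro D hD a ha hK₂a
  have hDa : ⋂₀ (Subtype.val '' D) ⊆ a.1 := ha.2 _ fun d hd => LQ.lqLe_sInter hW hD hd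
  obtain ⟨_, ⟨d, hdD, rfl⟩, hdU⟩ :=
    hW _ (LQ.forall_mem_image_val D) (cntFilteredFam_image_val hD) U hUo
      (hDa.trans (hK₂a.trans hK₂U))
  exact ⟨d, hdD, hdU.trans hUK₁⟩

/-- in a c-well-filtered P-space, if `K₂ ⊆ U ⊆ K₁` for some open `U`,
then `K₁ ≪꜀ K₂` in `(LQ(X), ⊇)`. -/
theorem stmt16 {X : Type u} [TopologicalSpace X] (hW : CWellFiltered X) (hP : PSpace X)
    (K₁ K₂ : LQ X) (h : ∃ U : Set X, IsOpen U ∧ K₂.1 ⊆ U ∧ U ⊆ K₁.1) :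
    CWayBelow (lqLe (X := X)) K₁ K₂ :=
  stmt16_general hW K₁ K₂ h
end
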